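/- Let β ∈ [0,1) and suppose β_n = β for all n. Then for every real c, lim_{n → ∞} d_n(t_n + (1−β)·r_n + c·w_n) = e^{−c}; that is, the sequence has a profile cutoff at (t_n + (1−β)·r_n, w_n) with profile F(c) = e^{−c}. In particular, for β = 0 this shows the right-window upper bound limsup_n d_n(t_n + r_n + c·w_n) ≤ e^{−c} is tight. -/

import Mathlib

open Filter Real
open scoped Topology

/-- `ℓ_n = log(n / log n)`. -/
noncomputable def ell (n : ℕ) : ℝ := Real.log (n / Real.log n)

/-- Distance to equilibrium of the Ornstein–Uhlenbeck example of Barrera–Ycart: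
`d_n(t) = Σ_{i=1}^{9^n} a_{i,n} e^{-ρ_{i,n} t}` with `a_{1,n} = e^n`,
`ρ_{1,n} = n/(1 + (β_n/n) ℓ_n)`, and for `2 ≤ i ≤ 9^n`:
`a_{i,n} = e^{-n}`, `ρ_{i,n} = log(e^n + (i-1) e^{-n})`. -/
noncomputable def dCut (β : ℕ → ℝ) (n : ℕ) (t : ℝ) : ℝ :=
  Real.exp n * Real.exp (-((n : ℝ) / (1 + β n / n * ell n)) * t) +
    ∑ i ∈ Finset.Icc (2 : ℕ) (9 ^ n),
      Real.exp (-(n : ℝ)) *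
        Real.exp (-Real.log (Real.exp n + ((i : ℝ) - 1) * Real.exp (-(n : ℝ))) * t)

/-- Cutoff location `t_n = 1 + β_n ℓ_n / n`. -/
noncomputable def cutT (β : ℕ → ℝ) (n : ℕ) : ℝ := 1 + β n * ell n / n

/-- Window width `w_n = t_n / n`. -/
noncomputable def cutW (β : ℕ → ℝ) (n : ℕ) : ℝ := cutT β n / n

/-- Correction term `r_n = ℓ_n w_n`. -/
noncomputable def cutR (β : ℕ → ℝ) (n : ℕ) : ℝ := ell n * cutW β n

/-!
Split `d_n = e^n e^{-ρ_{1,n} s} + (tail over 2 ≤ i ≤ 9^n)`. At the point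
`s_n = t_n (1 + ((1-β) ℓ_n + c)/n)` the first term is exactly `e^{-((1-β) ℓ_n + c)} → 0`.
The tail is an integral-test sum for `y ↦ y^{-s}`: with `x = s - 1` it lies between
`e^{-nx}/x · (2^{-x} - (9/e²)^{-nx})` and `e^{-nx}/x`. Here `n x_n = ℓ_n + c + o(1) → ∞`,
`x_n → 0`, and since `n e^{-ℓ_n} = log n ∼ ℓ_n`, `e^{-n x_n}/x_n → e^{-c}`.
-/

open Finset

lemma log_natCast_pos {n : ℕ} (hn : 2 ≤ n) : 0 < log n :=
  log_pos (by exact_mod_cast hn)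

lemma tendsto_log_natCast_atTop : Tendsto (fun n : ℕ => log n) atTop atTop :=
  tendsto_log_atTop.comp tendsto_natCast_atTop_atTop

lemma tendsto_log_pow_div_natCast (k : ℕ) :
    Tendsto (fun n : ℕ => log n ^ k / n) atTop (𝓝 0) := by
  simpa [Function.comp_def] using
    (tendsto_pow_log_div_mul_add_atTop 1 0 k one_ne_zero).comp tendsto_natCast_atTop_atTop

lemma exp_neg_ell {n : ℕ} (hn : 2 ≤ n) : exp (-ell n) = log n / n := by
  have := log_natCast_pos hn
  rw [ell, exp_neg, exp_log (by positivity), inv_div]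

lemma ell_nonneg {n : ℕ} (hn : 2 ≤ n) : 0 ≤ ell n := by
  have hlog := log_natCast_pos hn
  have hle : log n ≤ n := (log_le_sub_one_of_pos (by positivity)).trans (by linarith)
  exact log_nonneg ((one_le_div hlog).2 hle)

lemma ell_le_log {n : ℕ} (hn : 3 ≤ n) : ell n ≤ log n := by
  have h1 : 1 ≤ log n := by
    rw [le_log_iff_exp_le (by positivity)]
    exact exp_one_lt_three.le.trans (by exact_mod_cast hn)
  exact log_le_log (by positivity) (div_le_self (by positivity) h1)

lemma tendsto_ell_div_log : Tendsto (fun n : ℕ => ell n / log n) atTop (𝓝 1) := by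
  have hloglog : Tendsto (fun n : ℕ => log (log n) / log n) atTop (𝓝 0) := by
    simpa [Function.comp_def] using
      (tendsto_pow_log_div_mul_add_atTop 1 0 1 one_ne_zero).comp tendsto_log_natCast_atTop
  have h : Tendsto (fun n : ℕ => 1 - log (log n) / log n) atTop (𝓝 1) := by
    simpa using tendsto_const_nhds.sub hloglog
  refine h.congr' ?_
  filter_upwards [eventually_ge_atTop 2] with n hn
  have := log_natCast_pos hn
  rw [ell, log_div (by positivity) this.ne']
  field_simp

lemma tendsto_ell_atTop : Tendsto ell atTop atTop := by
  refine (tendsto_ell_div_log.pos_mul_atTop one_pos tendsto_log_natCast_atTop).congr' ?_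
  filter_upwards [eventually_ge_atTop 2] with n hn
  exact div_mul_cancel₀ _ (log_natCast_pos hn).ne'

lemma tendsto_ell_pow_div (k : ℕ) : Tendsto (fun n : ℕ => ell n ^ k / n) atTop (𝓝 0) := by
  refine squeeze_zero' ?_ ?_ (tendsto_log_pow_div_natCast k)
  · filter_upwards [eventually_ge_atTop 2] with n hn
    have := ell_nonneg hn
    positivity
  · filter_upwards [eventually_ge_atTop 3] with n hn
    gcongr
    · exact ell_nonneg (by omega)
    · exact ell_le_log hn

lemma tendsto_exp_neg_ell_add_div {a : ℕ → ℝ} {c : ℝ} (ha : Tendsto a atTop (𝓝 c)) :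
    Tendsto (fun n : ℕ => exp (-(ell n + a n)) / ((ell n + a n) / n)) atTop
      (𝓝 (exp (-c))) := by
  have hratio : Tendsto (fun n : ℕ => (ell n + a n) / log n) atTop (𝓝 1) := by
    simpa [add_div] using tendsto_ell_div_log.add (ha.div_atTop tendsto_log_natCast_atTop)
  have h : Tendsto (fun n => exp (-a n) / ((ell n + a n) / log n)) atTop (𝓝 (exp (-c))) := by
    simpa [Pi.div_def] using ha.neg.rexp.div hratio one_ne_zero
  refine h.congr' ?_
  filter_upwards [eventually_ge_atTop 2, (tendsto_ell_atTop.atTop_add ha).eventually_gt_atTop 0]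
    with n hn hpos
  have hlog := log_natCast_pos hn
  have hn0 : (0 : ℝ) < n := by positivity
  rw [neg_add, exp_add, exp_neg_ell hn]
  field_simp

lemma integral_rpow_neg_one_sub {a b x : ℝ} (ha : 0 < a) (hab : a ≤ b) (hx : 0 < x) :
    ∫ y in a..b, y ^ (-(1 + x)) = (a ^ (-x) - b ^ (-x)) / x := by
  rw [integral_rpow (Or.inr ⟨by linarith, by simp [Set.uIcc_of_le hab]; intro h; linarith⟩)]
  rw [show -(1 + x) + 1 = -x by ring, div_neg, ← neg_div, neg_sub]

lemma antitoneOn_rpow_neg_one_sub {a x : ℝ} (ha : 0 < a) (hx : 0 < x) (b : ℝ) :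
    AntitoneOn (fun y : ℝ => y ^ (-(1 + x))) (Set.Icc a b) :=
  (antitoneOn_rpow_Ioi_of_exponent_nonpos (by linarith)).mono
    fun _ hy => lt_of_lt_of_le ha hy.1

lemma sum_rpow_neg_one_sub_le {A x : ℝ} (hA : 0 < A) (hx : 0 < x) (M : ℕ) :
    ∑ j ∈ range M, (A + 1 + j) ^ (-(1 + x)) ≤ A ^ (-x) / x := by
  have h := (antitoneOn_rpow_neg_one_sub hA hx (A + M)).sum_le_integral
  rw [integral_rpow_neg_one_sub hA (by simp) hx] at h
  calc ∑ j ∈ range M, (A + 1 + j) ^ (-(1 + x))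
      = ∑ j ∈ range M, (A + (j + 1 : ℕ)) ^ (-(1 + x)) := by
        refine sum_congr rfl fun j _ => ?_
        push_cast; ring_nf
    _ ≤ (A ^ (-x) - (A + M) ^ (-x)) / x := h
    _ ≤ A ^ (-x) / x := by
        gcongr
        exact sub_le_self _ (by positivity)

lemma sub_div_le_sum_rpow_neg_one_sub {A x : ℝ} (hA : 0 ≤ A) (hx : 0 < x) (M : ℕ) :
    ((A + 1) ^ (-x) - (A + 1 + M) ^ (-x)) / x ≤ ∑ j ∈ range M, (A + 1 + j) ^ (-(1 + x)) := by
  have hA1 : 0 < A + 1 := by linarith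
  have h := (antitoneOn_rpow_neg_one_sub hA1 hx (A + 1 + M)).integral_le_sum
  rwa [integral_rpow_neg_one_sub hA1 (by simp) hx] at h

noncomputable def dCutTail (n : ℕ) (t : ℝ) : ℝ :=
  ∑ i ∈ Icc (2 : ℕ) (9 ^ n),
    exp (-(n : ℝ)) * exp (-log (exp n + ((i : ℝ) - 1) * exp (-(n : ℝ))) * t)

lemma dCut_eq (β : ℕ → ℝ) (n : ℕ) (t : ℝ) :
    dCut β n t = exp n * exp (-((n : ℝ) / (1 + β n / n * ell n)) * t) + dCutTail n t := rfl

lemma dCutTail_eq (n : ℕ) (t : ℝ) :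
    dCutTail n t =
      exp (n * (t - 1)) * ∑ j ∈ range (9 ^ n - 1), (exp (2 * n) + 1 + j) ^ (-t) := by
  rw [dCutTail, ← Ico_add_one_right_eq_Icc, sum_Ico_eq_sum_range, mul_sum,
    show 9 ^ n + 1 - 2 = 9 ^ n - 1 by omega]
  refine sum_congr rfl fun j _ => ?_
  have hfactor : exp n + ((2 + j : ℕ) - 1 : ℝ) * exp (-(n : ℝ)) =
      exp (-(n : ℝ)) * (exp (2 * n) + 1 + j) := by
    rw [mul_add, mul_add, ← exp_add]; push_cast; ring_nf
  rw [hfactor, log_mul (exp_ne_zero _) (by positivity), log_exp,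
    rpow_def_of_pos (by positivity), ← exp_add, ← exp_add]
  ring_nf

lemma dCutTail_le (n : ℕ) {x : ℝ} (hx : 0 < x) :
    dCutTail n (1 + x) ≤ exp (-(n * x)) / x := by
  rw [dCutTail_eq]
  calc exp (n * (1 + x - 1)) * ∑ j ∈ range (9 ^ n - 1), (exp (2 * n) + 1 + j) ^ (-(1 + x))
      ≤ exp (n * (1 + x - 1)) * (exp (2 * n) ^ (-x) / x) := by
        gcongr; exact sum_rpow_neg_one_sub_le (exp_pos _) hx _
    _ = exp (-(n * x)) / x := by
        rw [← exp_mul, mul_div_assoc', ← exp_add]; ring_nf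

/-- The integral test, with `(e^{2n} + 1)^{-x} ≥ (2 e^{2n})^{-x}` at the lower end and
`(e^{2n} + 9^n)^{-x} ≤ 9^{-nx}` at the upper end. -/
lemma le_dCutTail (n : ℕ) {x : ℝ} (hx : 0 < x) :
    exp (-(n * x)) / x * ((2 : ℝ) ^ (-x) - exp (-((log 9 - 2) * (n * x)))) ≤
      dCutTail n (1 + x) := by
  set A := exp (2 * n)
  have hA : 1 ≤ A := one_le_exp (by positivity)
  have hM : ((9 ^ n - 1 : ℕ) : ℝ) = 9 ^ n - 1 := by
    rw [Nat.cast_sub (Nat.one_le_pow _ _ (by norm_num))]; push_cast; ring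
  have hhead : 2 ^ (-x) * A ^ (-x) ≤ (A + 1) ^ (-x) := by
    rw [← mul_rpow (by norm_num) (by positivity)]
    exact rpow_le_rpow_of_nonpos (by positivity) (by linarith) (by linarith)
  have htail : (A + 1 + ((9 ^ n - 1 : ℕ) : ℝ)) ^ (-x) ≤ ((9 : ℝ) ^ n) ^ (-x) := by
    rw [hM]
    exact rpow_le_rpow_of_nonpos (by positivity) (by linarith) (by linarith)
  rw [dCutTail_eq]
  calc exp (-(n * x)) / x * ((2 : ℝ) ^ (-x) - exp (-((log 9 - 2) * (n * x))))
      = exp (n * x) * ((2 ^ (-x) * A ^ (-x) - ((9 : ℝ) ^ n) ^ (-x)) / x) := by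
        have h9 : ((9 : ℝ) ^ n) ^ (-x) = exp (-(log 9 * (n * x))) := by
          rw [← rpow_natCast_mul (by norm_num), rpow_def_of_pos (by norm_num)]; ring_nf
        have hA' : A ^ (-x) = exp (-(2 * (n * x))) := by rw [← exp_mul]; ring_nf
        have e1 : exp (n * x) * exp (-(2 * (n * x))) = exp (-(n * x)) := by
          rw [← exp_add]; ring_nf
        have e2 : exp (n * x) * exp (-(log 9 * (n * x))) =
            exp (-(n * x)) * exp (-((log 9 - 2) * (n * x))) := by
          rw [← exp_add, ← exp_add]; ring_nf
        rw [h9, hA', mul_div_assoc', div_mul_eq_mul_div]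
        congr 1
        linear_combination e2 - (2 : ℝ) ^ (-x) * e1
    _ ≤ exp (n * x) * (((A + 1) ^ (-x) - (A + 1 + ((9 ^ n - 1 : ℕ) : ℝ)) ^ (-x)) / x) := by
        gcongr
    _ ≤ _ := by
        rw [show (n : ℝ) * (1 + x - 1) = n * x by ring]
        gcongr
        exact sub_div_le_sum_rpow_neg_one_sub (by positivity) hx _

lemma two_lt_log_nine : 2 < log 9 := by
  have h3 : 1 < log 3 := (lt_log_iff_exp_lt (by norm_num)).2 exp_one_lt_three
  rw [show (9 : ℝ) = 3 ^ 2 by norm_num, log_pow]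
  push_cast
  linarith

lemma tendsto_dCutTail {x : ℕ → ℝ} {L : ℝ} (hx : Tendsto x atTop (𝓝 0))
    (hnx : Tendsto (fun n : ℕ => n * x n) atTop atTop)
    (hL : Tendsto (fun n : ℕ => exp (-(n * x n)) / x n) atTop (𝓝 L)) :
    Tendsto (fun n => dCutTail n (1 + x n)) atTop (𝓝 L) := by
  have hpos : ∀ᶠ n in atTop, 0 < x n := by
    filter_upwards [hnx.eventually_gt_atTop 0] with n hn
    exact pos_of_mul_pos_right hn n.cast_nonneg
  have hfactor : Tendsto (fun n : ℕ => (2 : ℝ) ^ (-x n) - exp (-((log 9 - 2) * (n * x n))))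
      atTop (𝓝 1) := by
    have h2 : Tendsto (fun n => (2 : ℝ) ^ (-x n)) atTop (𝓝 1) := by
      simpa using tendsto_const_nhds.rpow hx.neg (Or.inl two_ne_zero)
    have h9 : Tendsto (fun n : ℕ => exp (-((log 9 - 2) * (n * x n)))) atTop (𝓝 0) :=
      tendsto_exp_atBot.comp <| tendsto_neg_atTop_atBot.comp <|
        hnx.const_mul_atTop (sub_pos.2 two_lt_log_nine)
    simpa using h2.sub h9
  refine tendsto_of_tendsto_of_tendsto_of_le_of_le' (by simpa using hL.mul hfactor) hL ?_ ?_
  · filter_upwards [hpos] with n hn using le_dCutTail n hn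
  · filter_upwards [hpos] with n hn using dCutTail_le n hn

lemma tendsto_dCutTail_one_add_ell_add_div {a : ℕ → ℝ} {c : ℝ}
    (ha : Tendsto a atTop (𝓝 c)) :
    Tendsto (fun n : ℕ => dCutTail n (1 + (ell n + a n) / n)) atTop (𝓝 (exp (-c))) := by
  have hcancel : ∀ᶠ n : ℕ in atTop, (n : ℝ) * ((ell n + a n) / n) = ell n + a n := by
    filter_upwards [eventually_ne_atTop 0] with n hn
    exact mul_div_cancel₀ _ (by exact_mod_cast hn)
  refine tendsto_dCutTail ?_ ?_ ?_
  · simpa [add_div] using (tendsto_ell_pow_div 1).add (ha.div_atTop tendsto_natCast_atTop_atTop)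
  · exact (tendsto_ell_atTop.atTop_add ha).congr' (hcancel.mono fun n h => h.symm)
  · exact (tendsto_exp_neg_ell_add_div ha).congr' (hcancel.mono fun n h => by simp only [h])

/-- The evaluation point `s_n = t_n + (1-β) r_n + c w_n` satisfies
`n (s_n - 1) = ℓ_n + cutShift β c n` (see `dCut_cutPoint`). -/
noncomputable def cutShift (b c : ℝ) (n : ℕ) : ℝ :=
  c + b * ((1 - b) * (ell n ^ 2 / n) + c * (ell n / n))

lemma tendsto_cutShift (b c : ℝ) : Tendsto (cutShift b c) atTop (𝓝 c) := by
  have hℓ : Tendsto (fun n : ℕ => ell n / n) atTop (𝓝 0) := by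
    simpa using tendsto_ell_pow_div 1
  have h := (((tendsto_ell_pow_div 2).const_mul (1 - b)).add (hℓ.const_mul c)).const_mul b
  unfold cutShift
  simpa using h.const_add c

lemma dCut_cutPoint {β : ℕ → ℝ} {b : ℝ} (hβ : ∀ n, β n = b) (hb : 0 ≤ b) {n : ℕ}
    (hn : 2 ≤ n) (c : ℝ) :
    dCut β n (cutT β n + (1 - b) * cutR β n + c * cutW β n) =
      exp (-((1 - b) * ell n + c)) + dCutTail n (1 + (ell n + cutShift b c n) / n) := by
  have hn0 : (0 : ℝ) < n := by positivity
  have ht : (n : ℝ) + b * ell n ≠ 0 := by nlinarith [mul_nonneg hb (ell_nonneg hn)]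
  have hpoint : cutT β n + (1 - b) * cutR β n + c * cutW β n =
      (1 + b * ell n / n) * (1 + ((1 - b) * ell n + c) / n) := by
    rw [cutR, cutW, cutT, hβ]; ring
  rw [dCut_eq, hpoint, hβ, div_mul_eq_mul_div, ← exp_add]
  congr 2
  · field_simp; ring
  · rw [cutShift]; field_simp; ring

/-- Case `β_n ≡ β ∈ [0,1)` of Barrera–Ycart: a profile cutoff at
`(t_n + (1-β) r_n, w_n)` with profile `F(c) = e^{-c}` occurs: for every real `c`,
`d_n(t_n + (1-β) r_n + c w_n) → e^{-c}`. In particular (`β = 0`) the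
right-window upper bound `limsup_n d_n(t_n + r_n + c w_n) ≤ e^{-c}` is tight. -/
theorem profile_cutoff_beta_const
    (βc : ℝ) (hβ0 : 0 ≤ βc) (hβ1 : βc < 1)
    (β : ℕ → ℝ) (hβ : ∀ n, β n = βc) (c : ℝ) :
    Tendsto (fun n => dCut β n (cutT β n + (1 - βc) * cutR β n + c * cutW β n))
      atTop (𝓝 (Real.exp (-c))) := by
  have hhead : Tendsto (fun n => exp (-((1 - βc) * ell n + c))) atTop (𝓝 0) :=
    tendsto_exp_atBot.comp <| tendsto_neg_atTop_atBot.comp <|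
      tendsto_atTop_add_const_right _ c (tendsto_ell_atTop.const_mul_atTop (by linarith))
  rw [← zero_add (exp (-c))]
  refine (hhead.add (tendsto_dCutTail_one_add_ell_add_div (tendsto_cutShift βc c))).congr' ?_
  filter_upwards [eventually_ge_atTop 2] with n hn
  exact (dCut_cutPoint hβ hβ0 hn c).symm
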